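/- arXiv:2503.01026 — 2 statements merged into one kernel-verified Lean document; each statement's English description precedes it below -/
import Mathlib

section
/- For all j ≥ 1, the positions of symbols in the Narayana word n' (indexed from 1) satisfy: p_{02}(j) = [(j−1)_N 0]_N + 1, p_0(j) = [(j−1)_N 00]_N + 1, p_1(j) = [(j−1)_N 000]_N + 2 = p_0(j) + j, and p_2(j) = [(j−1)_N 0000]_N + 3 = p_1(j) + p_{02}(j). -/
def nu : Fin 3 → List (Fin 3) := fun a => if a = 0 then [0, 1] else if a = 1 then [2] else [0]

def nuPow (k : ℕ) : List (Fin 3) := (fun w => w.flatMap nu)^[k] [0]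


def nara : ℕ → ℕ
  | 0 => 1
  | 1 => 2
  | 2 => 3
  | (i+3) => nara (i+2) + nara i


def NaraRep (F : Finset ℕ) (m : ℕ) : Prop :=
  (∑ f ∈ F, nara f) = m ∧ ∀ a ∈ F, ∀ b ∈ F, a < b → a + 3 ≤ b


def nword (i : ℕ) : Fin 3 := (nuPow (i+2)).getD i 0


/-- \`x\` is the position (counting from 1) of the \`j\`-th position satisfying \`P\`
among positions \`1, 2, 3, …\`. -/
def OccPos (P : ℕ → Prop) (j x : ℕ) : Prop :=
  1 ≤ x ∧ P x ∧ {y | 1 ≤ y ∧ y ≤ x ∧ P y}.ncard = j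

/-! With `w_k = ν^k(0)` one has `w_{k+3} = w_{k+2} w_k`, so `|w_k| = N_k` and every letter count
of `w_k` is a shifted Narayana number. If `e_1 > ⋯ > e_r` have gaps at least `3` and
`t + 2 ≤ e_r`, then `w_{e_1} ⋯ w_{e_r} w_t` is a prefix of `n'`: peel off
`w_{e_1 + 1} = w_{e_1} w_{e_1 - 2}` and continue inside `w_{e_1 - 2}`. Taking `e_i = f_i + c`
for the Narayana digits `f_i` of `j - 1` and a short final block `w_t`, the length of this prefix is the
claimed position, it contains `j` copies of the letter in question, and it ends with that letter.
The two identities are the recurrence `N_{k+3} = N_{k+2} + N_k` summed over the digits. -/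

theorem List.iterate_flatMap_append {α : Type*} (f : α → List α) (k : ℕ) (u v : List α) :
    (fun w => w.flatMap f)^[k] (u ++ v) =
      (fun w => w.flatMap f)^[k] u ++ (fun w => w.flatMap f)^[k] v := by
  induction k generalizing u v with
  | zero => rfl
  | succ k ih => simp only [Function.iterate_succ_apply, List.flatMap_append, ih]

theorem nuPow_add (k m : ℕ) : nuPow (k + m) = (fun w => w.flatMap nu)^[k] (nuPow m) := by
  rw [nuPow, nuPow, Function.iterate_add_apply]

theorem nuPow_add_three (k : ℕ) : nuPow (k + 3) = nuPow (k + 2) ++ nuPow k := by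
  rw [nuPow_add, show nuPow 3 = nuPow 2 ++ nuPow 0 by decide, List.iterate_flatMap_append,
    ← nuPow_add, ← nuPow_add, add_zero]

theorem nuPow_prefix_nuPow_succ (k : ℕ) : nuPow k <+: nuPow (k + 1) := by
  rw [nuPow_add, show nuPow 1 = [0] ++ [1] by rfl, List.iterate_flatMap_append]
  exact List.prefix_append _ _

theorem nuPow_prefix_nuPow {k m : ℕ} (h : k ≤ m) : nuPow k <+: nuPow m := by
  induction m, h using Nat.le_induction with
  | base => exact List.prefix_refl _
  | succ m _ ih => exact ih.trans (nuPow_prefix_nuPow_succ m)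

theorem countP_nuPow_eq_nara (p : Fin 3 → Bool) (c : ℕ) (h₀ : (nuPow c).countP p = 1)
    (h₁ : (nuPow (c + 1)).countP p = 2) (h₂ : (nuPow (c + 2)).countP p = 3) :
    ∀ k, (nuPow (k + c)).countP p = nara k
  | 0 => by rwa [zero_add]
  | 1 => by rwa [add_comm]
  | 2 => by rwa [add_comm]
  | k + 3 => by
    rw [show k + 3 + c = k + c + 3 by omega, nuPow_add_three, List.countP_append,
      show k + c + 2 = k + 2 + c by omega, countP_nuPow_eq_nara p c h₀ h₁ h₂ (k + 2),
      countP_nuPow_eq_nara p c h₀ h₁ h₂ k]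
    rfl

theorem length_nuPow (k : ℕ) : (nuPow k).length = nara k := by
  simpa using countP_nuPow_eq_nara (fun _ => true) 0 rfl rfl rfl k

theorem lt_nara : ∀ k, k < nara k
  | 0 | 1 | 2 => by decide
  | k + 3 => by
    have := lt_nara (k + 2)
    have := lt_nara k
    change k + 3 < nara (k + 2) + nara k
    omega

theorem getElem_nuPow {m i : ℕ} (h : i < (nuPow m).length) : (nuPow m)[i] = nword i := by
  have hi : i < (nuPow (i + 2)).length := by
    have := lt_nara (i + 2)
    rw [length_nuPow]
    omega
  rw [nword, List.getD_eq_getElem _ _ hi, (nuPow_prefix_nuPow (le_max_left m (i + 2))).getElem h,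
    (nuPow_prefix_nuPow (le_max_right m (i + 2))).getElem hi]

theorem getElem_eq_nword_of_prefix {W : List (Fin 3)} {m i : ℕ} (h : W <+: nuPow m)
    (hi : i < W.length) : W[i] = nword i := by
  rw [h.getElem hi, getElem_nuPow]

theorem eq_map_nword_of_prefix {W : List (Fin 3)} {m : ℕ} (h : W <+: nuPow m) :
    W = (List.range W.length).map nword :=
  List.ext_getElem (by simp) fun i hi _ => by
    rw [List.getElem_map, List.getElem_range, getElem_eq_nword_of_prefix h hi]

theorem countP_map_range {α : Type*} (f : ℕ → α) (P : α → Prop) [DecidablePred P] (n : ℕ) :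
    ((List.range n).map f).countP (P ·) = Nat.count (fun i => P (f i)) n := by
  induction n with
  | zero => simp
  | succ n ih => simp [List.range_succ, Nat.count_succ, ih]

theorem ncard_occurrences_eq_count (Q : ℕ → Prop) [DecidablePred Q] (x : ℕ) :
    {y | 1 ≤ y ∧ y ≤ x ∧ Q (y - 1)}.ncard = Nat.count Q x := by
  have : {y | 1 ≤ y ∧ y ≤ x ∧ Q (y - 1)} =
      ({i ∈ Finset.range x | Q i}.map (addRightEmbedding 1) : Finset ℕ) := by
    ext y
    simp only [Set.mem_ofPred_eq, Finset.coe_map, Finset.coe_filter, Finset.mem_range,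
      Set.mem_image, addRightEmbedding_apply]
    constructor
    · rintro ⟨h1, h2, hQ⟩
      exact ⟨y - 1, ⟨by omega, hQ⟩, by omega⟩
    · rintro ⟨i, ⟨hi, hQ⟩, rfl⟩
      exact ⟨by omega, by omega, hQ⟩
  rw [this, Set.ncard_coe_finset, Finset.card_map, Nat.count_eq_card_filter_range]

theorem occPos_iff_count (Q : ℕ → Prop) [DecidablePred Q] (j x : ℕ) :
    OccPos (fun y => Q (y - 1)) j x ↔ 1 ≤ x ∧ Q (x - 1) ∧ Nat.count Q x = j := by
  rw [OccPos, ncard_occurrences_eq_count]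

theorem flatMap_nuPow_append_prefix {t : ℕ} :
    ∀ {E : List ℕ} {n : ℕ}, E.Pairwise (fun a b => b + 3 ≤ a) →
      (∀ e ∈ E, t + 2 ≤ e ∧ e < n) → t ≤ n → E.flatMap nuPow ++ nuPow t <+: nuPow n
  | [], _, _, _, htn => nuPow_prefix_nuPow htn
  | e :: E, n, hE, hbound, _ => by
    obtain ⟨hte, hen⟩ := hbound e List.mem_cons_self
    have hrest : E.flatMap nuPow ++ nuPow t <+: nuPow (e - 2) := by
      refine flatMap_nuPow_append_prefix (List.pairwise_cons.1 hE).2 (fun e' he' => ?_) (by omega)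
      have := (List.pairwise_cons.1 hE).1 e' he'
      exact ⟨(hbound e' (List.mem_cons_of_mem _ he')).1, by omega⟩
    have hsplit : nuPow (e + 1) = nuPow e ++ nuPow (e - 2) := by
      obtain ⟨k, rfl⟩ : ∃ k, e = k + 2 := ⟨e - 2, by omega⟩
      simpa using nuPow_add_three k
    calc (e :: E).flatMap nuPow ++ nuPow t = nuPow e ++ (E.flatMap nuPow ++ nuPow t) := by simp
      _ <+: nuPow e ++ nuPow (e - 2) := (List.prefix_append_right_inj _).2 hrest
      _ = nuPow (e + 1) := hsplit.symm
      _ <+: nuPow n := nuPow_prefix_nuPow hen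

theorem Finset.sum_map_sort {α M : Type*} [AddCommMonoid M] (s : Finset α)
    (r : α → α → Prop) [DecidableRel r] [IsTrans α r] [Std.Antisymm r] [Std.Total r]
    (g : α → M) : ((s.sort r).map g).sum = ∑ a ∈ s, g a := by
  rw [((s.sort_perm_toList r).map g).sum_eq, Finset.sum_map_toList]

theorem occPos_sum_nara {F : Finset ℕ} (hF : ∀ a ∈ F, ∀ b ∈ F, a < b → a + 3 ≤ b) {t : ℕ}
    (ht : ∀ f ∈ F, t + 2 ≤ f) (P : Fin 3 → Prop) [DecidablePred P] {a : Fin 3}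
    (hlast : (nuPow t).getLast? = some a) (ha : P a) :
    OccPos (fun y => P (nword (y - 1)))
      (∑ f ∈ F, (nuPow f).countP (P ·) + (nuPow t).countP (P ·)) (∑ f ∈ F, nara f + nara t) := by
  have hE : (F.sort (· ≥ ·)).Pairwise (fun a b => b + 3 ≤ a) :=
    (List.sortedGT_iff_pairwise.1 F.sortedGT_sort).imp_of_mem fun ha hb hab =>
      hF _ ((F.mem_sort _).1 hb) _ ((F.mem_sort _).1 ha) hab
  set W := (F.sort (· ≥ ·)).flatMap nuPow ++ nuPow t
  have hpre : W <+: nuPow (F.sup id + t + 1) := by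
    refine flatMap_nuPow_append_prefix hE (fun e he => ?_) (by omega)
    have := Finset.le_sup (f := id) ((F.mem_sort _).1 he)
    exact ⟨ht e ((F.mem_sort _).1 he), by simp only [id] at this; omega⟩
  have hlen : W.length = ∑ f ∈ F, nara f + nara t := by
    simp [W, List.length_flatMap, length_nuPow, Finset.sum_map_sort]
  have hpos : 0 < W.length := by
    have := lt_nara t
    omega
  rw [occPos_iff_count (fun i => P (nword i)), ← hlen]
  refine ⟨hpos, ?_, ?_⟩
  · have : W.getLast? = some a := by simp [W, List.getLast?_append, hlast]
    rw [List.getLast?_eq_getElem?, List.getElem?_eq_getElem (by omega), Option.some_inj,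
      getElem_eq_nword_of_prefix hpre] at this
    rwa [this]
  · rw [← countP_map_range, ← eq_map_nword_of_prefix hpre]
    simp [W, List.countP_flatMap, Function.comp_def, Finset.sum_map_sort]

theorem occPos_sum_nara_add {F : Finset ℕ} (hF : ∀ a ∈ F, ∀ b ∈ F, a < b → a + 3 ≤ b)
    {c t : ℕ} (ht : ∀ f ∈ F, t + 2 ≤ f + c) (P : Fin 3 → Prop) [DecidablePred P]
    (hP : ∀ k, (nuPow (k + c)).countP (P ·) = nara k) {a : Fin 3}
    (hlast : (nuPow t).getLast? = some a) (ha : P a) {j : ℕ}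
    (hj : ∑ f ∈ F, nara f + (nuPow t).countP (P ·) = j) :
    OccPos (fun y => P (nword (y - 1))) j (∑ f ∈ F, nara (f + c) + nara t) := by
  have hFc : ∀ a ∈ F.map (addRightEmbedding c), ∀ b ∈ F.map (addRightEmbedding c),
      a < b → a + 3 ≤ b := by
    simp only [Finset.mem_map, addRightEmbedding_apply]
    rintro _ ⟨a, ha, rfl⟩ _ ⟨b, hb, rfl⟩ hab
    have := hF a ha b hb (by omega)
    omega
  have := occPos_sum_nara hFc (t := t) (by simpa using ht) P hlast ha
  simpa [Finset.sum_map, hP, hj] using this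

theorem occPos_zero_or_two {F : Finset ℕ} (hF : ∀ a ∈ F, ∀ b ∈ F, a < b → a + 3 ≤ b) {j : ℕ}
    (hj : ∑ f ∈ F, nara f + 1 = j) :
    OccPos (fun y => nword (y - 1) = 0 ∨ nword (y - 1) = 2) j (∑ f ∈ F, nara (f + 1) + 1) := by
  have hP := countP_nuPow_eq_nara (fun a : Fin 3 => decide (a = 0 ∨ a = 2)) 1
    (by decide) (by decide) (by decide)
  by_cases h0 : 0 ∈ F
  · -- The block `w₁` coming from the digit `0` is followed in `n'` by the letter `2`, not by
    -- `w₀`, so the prefix is read as `⋯ w₂` with `w₂ = w₁ 2` instead of `⋯ w₁ w₀`.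
    have hF' : ∀ a ∈ F.erase 0, ∀ b ∈ F.erase 0, a < b → a + 3 ≤ b := fun a ha b hb =>
      hF a (Finset.mem_of_mem_erase ha) b (Finset.mem_of_mem_erase hb)
    have ht : ∀ f ∈ F.erase 0, 2 + 2 ≤ f + 1 := fun f hf => by
      have := Finset.ne_of_mem_erase hf
      have := hF 0 h0 f (Finset.mem_of_mem_erase hf) (by omega)
      omega
    rw [← Finset.sum_erase_add _ _ h0] at hj ⊢
    exact occPos_sum_nara_add hF' ht (fun a => a = 0 ∨ a = 2) hP rfl (Or.inr rfl) hj
  · have ht : ∀ f ∈ F, 0 + 2 ≤ f + 1 := fun f hf => by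
      have : f ≠ 0 := fun h => h0 (h ▸ hf)
      omega
    exact occPos_sum_nara_add hF ht (fun a => a = 0 ∨ a = 2) hP rfl (Or.inl rfl) hj

theorem positions_of_symbols (j : ℕ) (hj : 1 ≤ j) (F : Finset ℕ) (hF : NaraRep F (j - 1)) :
    OccPos (fun y => nword (y - 1) = 0 ∨ nword (y - 1) = 2) j ((∑ f ∈ F, nara (f + 1)) + 1) ∧
    OccPos (fun y => nword (y - 1) = 0) j ((∑ f ∈ F, nara (f + 2)) + 1) ∧
    OccPos (fun y => nword (y - 1) = 1) j ((∑ f ∈ F, nara (f + 3)) + 2) ∧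
    (∑ f ∈ F, nara (f + 3)) + 2 = ((∑ f ∈ F, nara (f + 2)) + 1) + j ∧
    OccPos (fun y => nword (y - 1) = 2) j ((∑ f ∈ F, nara (f + 4)) + 3) ∧
    (∑ f ∈ F, nara (f + 4)) + 3 =
      (((∑ f ∈ F, nara (f + 3)) + 2) + ((∑ f ∈ F, nara (f + 1)) + 1)) := by
  obtain ⟨hsum, hgap⟩ := hF
  have hj' : ∑ f ∈ F, nara f + 1 = j := by omega
  have h3 : ∑ f ∈ F, nara (f + 3) = ∑ f ∈ F, nara (f + 2) + ∑ f ∈ F, nara f :=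
    Finset.sum_add_distrib
  have h4 : ∑ f ∈ F, nara (f + 4) = ∑ f ∈ F, nara (f + 3) + ∑ f ∈ F, nara (f + 1) :=
    Finset.sum_add_distrib
  refine ⟨occPos_zero_or_two hgap hj', ?_, ?_, by omega, ?_, by omega⟩
  · exact occPos_sum_nara_add hgap (t := 0) (fun _ _ => by omega) (· = 0)
      (countP_nuPow_eq_nara _ 2 (by decide) (by decide) (by decide)) rfl rfl hj'
  · exact occPos_sum_nara_add hgap (t := 1) (fun _ _ => by omega) (· = 1)
      (countP_nuPow_eq_nara _ 3 (by decide) (by decide) (by decide)) rfl rfl hj'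
  · exact occPos_sum_nara_add hgap (t := 2) (fun _ _ => by omega) (· = 2)
      (countP_nuPow_eq_nara _ 4 (by decide) (by decide) (by decide)) rfl rfl hj'
end

section
/- Let h(i) be defined from the Narayana representation of i: if (i)_N = e_1...e_t, then h(i) = [e_1...e_{t-1}]_N + e_t (shift off the last digit and add it back as a unit). Then h(0) = 0 and h(i) = i − h(h(h(i−1))) for all i ≥ 1; i.e., h equals the Hofstadter H-sequence. -/
theorem nara_pos : ∀ k, 0 < nara k
  | 0 => by norm_num [nara]
  | 1 => by norm_num [nara]
  | 2 => by norm_num [nara]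
  | (n+3) => by have := nara_pos n; have := nara_pos (n+2); simp only [nara]; omega

theorem nara_rec (k : ℕ) : nara (k+3) = nara (k+2) + nara k := rfl

theorem nara_lt_succ : ∀ k, nara k < nara (k+1)
  | 0 => by norm_num [nara]
  | 1 => by norm_num [nara]
  | (n+2) => by have := nara_pos n; rw [nara_rec]; omega

theorem nara_mono : StrictMono nara := strictMono_nat_of_lt_succ nara_lt_succ

theorem nara_ge : ∀ k, k + 1 ≤ nara k
  | 0 => by norm_num [nara]
  | 1 => by norm_num [nara]
  | 2 => by norm_num [nara]
  | (n+3) => by have := nara_ge (n+2); have := nara_pos n; rw [nara_rec]; omega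

theorem greedy {i : ℕ} (hi : 1 ≤ i) : ∃ k, nara k ≤ i ∧ i < nara (k+1) := by
  classical
  set P := fun j => nara j ≤ i with hP
  have h0 : P 0 := by simpa [hP, nara] using hi
  refine ⟨Nat.findGreatest P i, Nat.findGreatest_spec (Nat.zero_le i) h0, ?_⟩
  by_contra hlt
  push_neg at hlt
  have hle : Nat.findGreatest P i + 1 ≤ i :=
    le_trans (le_trans (by omega) (nara_ge (Nat.findGreatest P i + 1))) hlt
  exact Nat.findGreatest_is_greatest (Nat.lt_succ_self _) hle hlt

theorem naraRep_empty : NaraRep ∅ 0 := ⟨by simp, by simp⟩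

theorem naraRep_singleton (k : ℕ) : NaraRep {k} (nara k) :=
  ⟨by simp, by intro a ha b hb hab; simp only [Finset.mem_singleton] at ha hb; omega⟩

section HLemmas

variable {h : ℕ → ℕ}
  (hdef : ∀ i : ℕ, ∀ F : Finset ℕ, NaraRep F i →
      h i = (∑ f ∈ F.erase 0, nara (f - 1)) + (if 0 ∈ F then 1 else 0))

include hdef

theorem h_zero : h 0 = 0 := by simpa using hdef 0 ∅ naraRep_empty

theorem h_one : h 1 = 1 := by
  have := hdef 1 {0} (by simpa [nara] using naraRep_singleton 0)
  simpa using this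

theorem h_nara (k : ℕ) (hk : 1 ≤ k) : h (nara k) = nara (k-1) := by
  have hne : k ≠ 0 := by omega
  have := hdef (nara k) {k} (naraRep_singleton k)
  rw [this, Finset.erase_eq_of_notMem (by simp only [Finset.mem_singleton]; omega)]
  simp only [Finset.sum_singleton, Finset.mem_singleton]
  rw [if_neg (by omega)]
  omega

theorem h_two : h 2 = 1 := h_nara hdef 1 le_rfl

theorem h_three : h 3 = 2 := h_nara hdef 2 (by norm_num)

theorem h_four : h 4 = 3 := h_nara hdef 3 (by norm_num)

end HLemmas

theorem exists_rep : ∀ r : ℕ, ∀ k : ℕ, r < nara k →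
    ∃ F : Finset ℕ, NaraRep F r ∧ ∀ f ∈ F, f < k := by
  intro r
  induction r using Nat.strong_induction_on with
  | _ r IH =>
    intro k hk
    rcases Nat.eq_zero_or_pos r with rfl | hr
    · exact ⟨∅, naraRep_empty, by simp⟩
    obtain ⟨j, hj1, hj2⟩ := greedy hr
    have hjk : j < k := nara_mono.lt_iff_lt.mp (lt_of_le_of_lt hj1 hk)
    match j, hj1, hj2, hjk with
    | 0, hj1, hj2, hjk =>
      have hr1 : r = 1 := by norm_num [nara] at hj1 hj2; omega
      subst hr1
      exact ⟨{0}, by simpa [nara] using naraRep_singleton 0, by simpa using hjk⟩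
    | 1, hj1, hj2, hjk =>
      have hr1 : r = 2 := by norm_num [nara] at hj1 hj2; omega
      subst hr1
      exact ⟨{1}, by simpa [nara] using naraRep_singleton 1, by simpa using hjk⟩
    | (j+2), hj1, hj2, hjk =>
      have hj2' : r < nara (j+3) := hj2
      have hrec : nara (j+3) = nara (j+2) + nara j := nara_rec j
      have hpos := nara_pos (j+2)
      have hr' : r - nara (j+2) < nara j := by omega
      obtain ⟨F', hF', hb⟩ := IH (r - nara (j+2)) (by omega) j hr'
      have hnm : (j+2) ∉ F' := fun hmem => absurd (hb _ hmem) (by omega)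
      refine ⟨insert (j+2) F', ⟨?_, ?_⟩, ?_⟩
      · rw [Finset.sum_insert hnm, hF'.1]; omega
      · intro a ha b hb' hab
        rcases Finset.mem_insert.mp ha with rfl | ha'
        · rcases Finset.mem_insert.mp hb' with rfl | hb''
          · omega
          · have := hb _ hb''; omega
        · rcases Finset.mem_insert.mp hb' with rfl | hb''
          · have := hb _ ha'; omega
          · exact hF'.2 _ ha' _ hb'' hab
      · intro f hf
        rcases Finset.mem_insert.mp hf with rfl | hf'
        · exact hjk
        · exact lt_trans (hb _ hf') (by omega)

section Main

variable {h : ℕ → ℕ}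
  (hdef : ∀ i : ℕ, ∀ F : Finset ℕ, NaraRep F i →
      h i = (∑ f ∈ F.erase 0, nara (f - 1)) + (if 0 ∈ F then 1 else 0))

include hdef

theorem shift_add : ∀ k : ℕ, 1 ≤ k → ∀ r : ℕ, r ≤ nara (k-2) →
    h (nara k + r) = nara (k-1) + h r := by
  intro k hk r hr
  match k, hk, hr with
  | 1, _, hr =>
    have hr' : r ≤ 1 := hr
    show h (2 + r) = 1 + h r
    interval_cases r
    · simpa [h_zero hdef] using h_two hdef
    · simpa [h_one hdef] using h_three hdef
  | 2, _, hr =>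
    have hr' : r ≤ 1 := hr
    show h (3 + r) = 2 + h r
    interval_cases r
    · simpa [h_zero hdef] using h_three hdef
    · simpa [h_one hdef] using h_four hdef
  | (m+3), _, hr =>
    have hr' : r ≤ nara (m+1) := hr
    show h (nara (m+3) + r) = nara (m+2) + h r
    rcases eq_or_lt_of_le hr' with rfl | hlt
    · have e1 : nara (m+3) + nara (m+1) = nara (m+4) := (nara_rec (m+1)).symm
      rw [e1]
      have v1 : h (nara (m+4)) = nara (m+3) := h_nara hdef (m+4) (by omega)
      have v2 : h (nara (m+1)) = nara m := h_nara hdef (m+1) (by omega)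
      rw [v1, v2]
      exact nara_rec m
    · obtain ⟨F, hF, hb⟩ := exists_rep r (m+1) hlt
      have hnm : (m+3) ∉ F := fun hmem => absurd (hb _ hmem) (by omega)
      have hG : NaraRep (insert (m+3) F) (nara (m+3) + r) := by
        constructor
        · rw [Finset.sum_insert hnm, hF.1]
        · intro a ha b hb' hab
          rcases Finset.mem_insert.mp ha with rfl | ha'
          · rcases Finset.mem_insert.mp hb' with rfl | hb''
            · omega
            · have := hb _ hb''; omega
          · rcases Finset.mem_insert.mp hb' with rfl | hb''
            · have := hb _ ha'; omega
            · exact hF.2 _ ha' _ hb'' hab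
      have hne : (m+3) ≠ 0 := by omega
      have h1 := hdef (nara (m+3) + r) (insert (m+3) F) hG
      have h2 := hdef r F hF
      have hnm' : (m+3) ∉ F.erase 0 := fun hmem => hnm (Finset.mem_of_mem_erase hmem)
      rw [Finset.erase_insert_of_ne hne, Finset.sum_insert hnm'] at h1
      by_cases h0 : 0 ∈ F
      · rw [if_pos (Finset.mem_insert.mpr (Or.inr h0))] at h1
        rw [if_pos h0] at h2
        rw [h1, h2]
        have : nara (m+3-1) = nara (m+2) := rfl
        omega
      · rw [if_neg (by simp only [Finset.mem_insert]; push_neg; exact ⟨hne.symm, h0⟩)] at h1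
        rw [if_neg h0] at h2
        rw [h1, h2]
        have : nara (m+3-1) = nara (m+2) := rfl
        omega

theorem h_le : ∀ x : ℕ, ∀ j : ℕ, x ≤ nara j → h x ≤ nara (j-1) := by
  intro x
  induction x using Nat.strong_induction_on with
  | _ x IH =>
    intro j hx
    rcases Nat.eq_zero_or_pos x with rfl | hx1
    · rw [h_zero hdef]; exact Nat.zero_le _
    obtain ⟨k, hk1, hk2⟩ := greedy hx1
    have hkj : k ≤ j := by
      by_contra hc
      push_neg at hc
      exact absurd (lt_of_le_of_lt (le_trans hk1 hx) (nara_mono hc)) (lt_irrefl _)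
    have hjpos : 1 ≤ nara (j-1) := nara_pos _
    match k, hk1, hk2, hkj with
    | 0, hk1, hk2, hkj =>
      have : x = 1 := by norm_num [nara] at hk1 hk2; omega
      rw [this, h_one hdef]; exact hjpos
    | 1, hk1, hk2, hkj =>
      have : x = 2 := by norm_num [nara] at hk1 hk2; omega
      rw [this, h_two hdef]; exact hjpos
    | 2, hk1, hk2, hkj =>
      have hx3 : x = 3 := by norm_num [nara] at hk1 hk2; omega
      rw [hx3, h_three hdef]
      have hj2 : 2 ≤ j := by
        by_contra hc
        push_neg at hc
        interval_cases j <;> norm_num [nara] at hx <;> omega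
      calc (2:ℕ) = nara 1 := by norm_num [nara]
        _ ≤ nara (j-1) := nara_mono.monotone (by omega)
    | (m+3), hk1, hk2, hkj =>
      have hk2' : x < nara (m+4) := hk2
      have hrec : nara (m+4) = nara (m+3) + nara (m+1) := nara_rec (m+1)
      rcases eq_or_lt_of_le hkj with rfl | hlt
      · have hxe : x = nara (m+3) := le_antisymm hx hk1
        rw [hxe]
        exact le_of_eq (h_nara hdef (m+3) (by omega))
      · have hr : x - nara (m+3) ≤ nara (m+1) := by omega
        have heq : x = nara (m+3) + (x - nara (m+3)) := by omega
        have e1 : h x = nara (m+2) + h (x - nara (m+3)) := by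
          conv_lhs => rw [heq]
          exact shift_add hdef (m+3) (by omega) _ hr
        have hrx : x - nara (m+3) < x := by have := nara_pos (m+3); omega
        have hle1 : h (x - nara (m+3)) ≤ nara m := IH _ hrx (m+1) hr
        have e2 : nara (m+2) + nara m = nara (m+3) := (nara_rec m).symm
        have e3 : nara (m+3) ≤ nara (j-1) := nara_mono.monotone (by omega)
        omega

theorem h_pred : ∀ k : ℕ, 1 ≤ k →
    h (nara k - 1) = nara (k-1) - (if k % 3 = 1 then 0 else 1) := by
  intro k
  induction k using Nat.strong_induction_on with
  | _ k IH =>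
    intro hk
    match k, hk with
    | 1, _ => norm_num [nara, h_one hdef]
    | 2, _ => norm_num [nara, h_two hdef]
    | 3, _ => norm_num [nara, h_three hdef]
    | (m+4), _ =>
      have hpos1 := nara_pos (m+1)
      have hrec4 : nara (m+4) = nara (m+3) + nara (m+1) := nara_rec (m+1)
      have e1 : nara (m+4) - 1 = nara (m+3) + (nara (m+1) - 1) := by omega
      have e2 : h (nara (m+3) + (nara (m+1) - 1)) = nara (m+2) + h (nara (m+1) - 1) :=
        shift_add hdef (m+3) (by omega) _ (show nara (m+1) - 1 ≤ nara (m+1) by omega)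
      have e3 : h (nara (m+1) - 1) = nara m - (if (m+1) % 3 = 1 then 0 else 1) :=
        IH (m+1) (by omega) (by omega)
      have hposm := nara_pos m
      have e4 : nara (m+2) + nara m = nara (m+3) := (nara_rec m).symm
      have e5 : (m+4) % 3 = (m+1) % 3 := by omega
      rw [e1, e2, e3]
      show nara (m+2) + (nara m - _) = nara (m+3) - _
      rw [e5]
      by_cases hc : (m+1) % 3 = 1 <;> simp only [hc, if_true, if_false] <;> omega

theorem h_main : ∀ i : ℕ, 1 ≤ i → h i + h (h (h (i - 1))) = i := by
  intro i
  induction i using Nat.strong_induction_on with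
  | _ i IH =>
    intro hi
    obtain ⟨k, hk1, hk2⟩ := greedy hi
    match k, hk1, hk2 with
    | 0, hk1, hk2 =>
      have : i = 1 := by norm_num [nara] at hk1 hk2; omega
      subst this
      norm_num [h_one hdef, h_zero hdef]
    | 1, hk1, hk2 =>
      have : i = 2 := by norm_num [nara] at hk1 hk2; omega
      subst this
      norm_num [h_two hdef, h_one hdef]
    | 2, hk1, hk2 =>
      have : i = 3 := by norm_num [nara] at hk1 hk2; omega
      subst this
      norm_num [h_three hdef, h_two hdef, h_one hdef]
    | (m+3), hk1, hk2 =>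
      have hk2' : i < nara (m+4) := hk2
      have hrec4 : nara (m+4) = nara (m+3) + nara (m+1) := nara_rec (m+1)
      have hrlt : i - nara (m+3) < nara (m+1) := by omega
      have hnpos := nara_pos (m+3)
      rcases Nat.eq_zero_or_pos (i - nara (m+3)) with hr0 | hr1
      · -- i = nara (m+3)
        have hie : i = nara (m+3) := by omega
        subst hie
        have hv : h (nara (m+3)) = nara (m+2) := h_nara hdef (m+3) (by omega)
        rw [hv]
        have key : h (h (h (nara (m+3) - 1))) = nara m := by
          have hm3 : m % 3 = 0 ∨ m % 3 = 1 ∨ m % 3 = 2 := by omega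
          rcases hm3 with hm | hm | hm
          · have s1 : h (nara (m+3) - 1) = nara (m+2) - 1 := by
              have t := h_pred hdef (m+3) (by omega)
              rw [if_neg (by omega)] at t
              exact t
            have s2 : h (nara (m+2) - 1) = nara (m+1) - 1 := by
              have t := h_pred hdef (m+2) (by omega)
              rw [if_neg (by omega)] at t
              exact t
            have s3 : h (nara (m+1) - 1) = nara m := by
              have t := h_pred hdef (m+1) (by omega)
              rw [if_pos (by omega)] at t
              simpa using t
            rw [s1, s2, s3]
          · have s1 : h (nara (m+3) - 1) = nara (m+2) := by
              have t := h_pred hdef (m+3) (by omega)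
              rw [if_pos (by omega)] at t
              simpa using t
            have s2 : h (nara (m+2)) = nara (m+1) := h_nara hdef (m+2) (by omega)
            have s3 : h (nara (m+1)) = nara m := h_nara hdef (m+1) (by omega)
            rw [s1, s2, s3]
          · have s1 : h (nara (m+3) - 1) = nara (m+2) - 1 := by
              have t := h_pred hdef (m+3) (by omega)
              rw [if_neg (by omega)] at t
              exact t
            have s2 : h (nara (m+2) - 1) = nara (m+1) := by
              have t := h_pred hdef (m+2) (by omega)
              rw [if_pos (by omega)] at t
              simpa using t
            have s3 : h (nara (m+1)) = nara m := h_nara hdef (m+1) (by omega)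
            rw [s1, s2, s3]
        rw [key]
        exact (nara_rec m).symm
      · -- r ≥ 1
        set r := i - nara (m+3) with hrdef
        have hie : i = nara (m+3) + r := by omega
        have e1 : h i = nara (m+2) + h r := by
          rw [hie]
          exact shift_add hdef (m+3) (by omega) r (show r ≤ nara (m+1) by omega)
        have e2 : h (i - 1) = nara (m+2) + h (r - 1) := by
          have heq : i - 1 = nara (m+3) + (r - 1) := by omega
          rw [heq]
          exact shift_add hdef (m+3) (by omega) (r-1) (show r - 1 ≤ nara (m+1) by omega)
        have b1 : h (r - 1) ≤ nara m := h_le hdef (r-1) (m+1) (by omega)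
        have e3 : h (h (i - 1)) = nara (m+1) + h (h (r - 1)) := by
          rw [e2]
          exact shift_add hdef (m+2) (by omega) (h (r-1)) b1
        have b2 : h (h (r - 1)) ≤ nara (m - 1) := h_le hdef (h (r-1)) m b1
        have e4 : h (h (h (i - 1))) = nara m + h (h (h (r - 1))) := by
          rw [e3]
          exact shift_add hdef (m+1) (by omega) (h (h (r-1))) b2
        have ihr := IH r (by omega) hr1
        have hrc := nara_rec m
        omega

end Main

theorem h_is_hofstadter (h : ℕ → ℕ)
    (hdef : ∀ i : ℕ, ∀ F : Finset ℕ, NaraRep F i →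
      h i = (∑ f ∈ F.erase 0, nara (f - 1)) + (if 0 ∈ F then 1 else 0)) :
    h 0 = 0 ∧ ∀ i : ℕ, 1 ≤ i → h i + h (h (h (i - 1))) = i := by
  exact ⟨h_zero hdef, h_main hdef⟩
end
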